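/- Under the hypotheses of the previous combinatorial lemma with σ(n) = M·(n+1)^{−1/(2+D)} for M ≥ 0 and D ≥ 0, the total regret satisfies ∑_{t=1}^T σ(n_{I_t}(t−1)) ≤ M · K · ((2+D)/(1+D)) · T^{(1+D)/(2+D)}. -/
import Mathlib

open Finset

open Finset

lemma step_rpow (a b : ℝ) (ha : 0 ≤ a) (hb : 0 < b) (hab : a + b = 1) (x : ℝ) (hx : 1 ≤ x) :
    b * x ^ (-a) ≤ x ^ b - (x - 1) ^ b := by
  have hx0 : 0 < x := lt_of_lt_of_le one_pos hx
  have hs : -1 ≤ -1 / x := by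
    rw [neg_div, neg_le_neg_iff]
    exact div_le_one_of_le₀ hx hx0.le
  have hb1 : b ≤ 1 := by linarith
  have h := rpow_one_add_le_one_add_mul_self hs hb.le hb1
  have h1 : (1 : ℝ) + -1 / x = (x - 1) / x := by field_simp; ring
  rw [h1] at h
  have hxb : (0:ℝ) < x ^ b := Real.rpow_pos_of_pos hx0 b
  have h2 : ((x - 1) / x) ^ b * x ^ b ≤ (1 + b * (-1 / x)) * x ^ b :=
    mul_le_mul_of_nonneg_right h hxb.le
  have h3 : ((x - 1) / x) ^ b * x ^ b = (x - 1) ^ b := by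
    rw [Real.div_rpow (by linarith) hx0.le]
    field_simp
  have h4 : x ^ b / x = x ^ (-a) := by
    rw [← Real.rpow_sub_one hx0.ne']
    congr 1; linarith
  rw [h3] at h2
  have h5 : (1 + b * (-1 / x)) * x ^ b = x ^ b - b * x ^ (-a) := by
    rw [← h4]; ring
  rw [h5] at h2
  linarith

lemma sum_rpow_le (a b : ℝ) (ha : 0 ≤ a) (hb : 0 < b) (hab : a + b = 1) (c : ℕ) :
    ∑ k ∈ Finset.range c, ((k : ℝ) + 1) ^ (-a) ≤ (1 / b) * (c : ℝ) ^ b := by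
  induction c with
  | zero => simp [Real.zero_rpow hb.ne']
  | succ c ih =>
    rw [Finset.sum_range_succ]
    have hx : (1:ℝ) ≤ (c : ℝ) + 1 := by nlinarith [Nat.cast_nonneg (α := ℝ) c]
    have hstep := step_rpow a b ha hb hab ((c:ℝ)+1) hx
    have : ((c:ℝ) + 1) - 1 = (c : ℝ) := by ring
    rw [this] at hstep
    push_cast
    rw [div_mul_eq_mul_div, le_div_iff₀ hb] at *
    nlinarith [ih]

theorem stmt_4 (K T : ℕ) (hK : 0 < K) (hT : 0 < T)
    (D M : ℝ) (hD : 0 ≤ D) (hM : 0 ≤ M)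
    (I : ℕ → Fin K)
    (n : Fin K → ℕ → ℕ)
    (hn : ∀ i t, n i t = ((Finset.range t).filter (fun s => I s = i)).card)
    (σ : ℕ → ℝ) (hσ : ∀ m : ℕ, σ m = M * ((m : ℝ) + 1) ^ (-(1 / (2 + D)))) :
    (∑ t ∈ Finset.range T, σ (n (I t) t)) ≤
      M * K * ((2 + D) / (1 + D)) * (T : ℝ) ^ ((1 + D) / (2 + D)) := by
  have h2D : (0:ℝ) < 2 + D := by linarith
  have h1D : (0:ℝ) < 1 + D := by linarith
  set a : ℝ := 1 / (2 + D) with ha_def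
  set b : ℝ := (1 + D) / (2 + D) with hb_def
  have ha : 0 ≤ a := by positivity
  have hb : 0 < b := by positivity
  have hab : a + b = 1 := by rw [ha_def, hb_def]; field_simp; ring
  rw [← Finset.sum_fiberwise (Finset.range T) I (fun t => σ (n (I t) t))]
  have hfiber : ∀ i : Fin K,
      (∑ t ∈ (Finset.range T).filter (fun t => I t = i), σ (n (I t) t)) ≤
        M * (1 / b) * (T : ℝ) ^ b := by
    intro i
    set S : Finset ℕ := (Finset.range T).filter (fun t => I t = i) with hS
    have hmono : ∀ t ∈ S, ∀ t' ∈ S, t < t' → n i t < n i t' := by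
      intro t ht t' ht' hlt
      rw [hn, hn]
      apply Finset.card_lt_card
      rw [Finset.ssubset_iff_of_subset
        (Finset.filter_subset_filter _ (Finset.range_subset_range.mpr hlt.le))]
      refine ⟨t, ?_, ?_⟩
      · simp only [Finset.mem_filter, Finset.mem_range]
        exact ⟨hlt, (Finset.mem_filter.mp ht).2⟩
      · simp
    have hinj : ∀ t ∈ S, ∀ t' ∈ S, n i t = n i t' → t = t' := by
      intro t ht t' ht' h
      rcases lt_trichotomy t t' with hc | hc | hc
      · exact absurd h (hmono t ht t' ht' hc).ne
      · exact hc
      · exact absurd h.symm (hmono t' ht' t ht hc).ne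
    have hlt : ∀ t ∈ S, n i t < S.card := by
      intro t ht
      rw [hn]
      apply Finset.card_lt_card
      rw [Finset.ssubset_iff_of_subset (Finset.filter_subset_filter _
        (Finset.range_subset_range.mpr (Finset.mem_range.mp (Finset.mem_filter.mp ht).1).le))]
      exact ⟨t, ht, by simp⟩
    have himg : S.image (fun t => n i t) = Finset.range S.card := by
      apply Finset.eq_of_subset_of_card_le
      · intro k hk
        rcases Finset.mem_image.mp hk with ⟨t, ht, rfl⟩
        exact Finset.mem_range.mpr (hlt t ht)
      · rw [Finset.card_range, Finset.card_image_of_injOn hinj]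
    have hsum : (∑ t ∈ S, σ (n (I t) t)) = ∑ k ∈ Finset.range S.card, σ k := by
      rw [← himg, Finset.sum_image hinj]
      apply Finset.sum_congr rfl
      intro t ht
      rw [(Finset.mem_filter.mp ht).2]
    rw [hsum]
    have h1 : (∑ k ∈ Finset.range S.card, σ k)
        = M * ∑ k ∈ Finset.range S.card, ((k:ℝ) + 1) ^ (-a) := by
      rw [Finset.mul_sum]
      exact Finset.sum_congr rfl fun k _ => hσ k
    rw [h1]
    have h2 := sum_rpow_le a b ha hb hab S.card
    have hcard : (S.card : ℝ) ≤ (T : ℝ) := by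
      exact_mod_cast Nat.le_of_lt_succ (Nat.lt_succ_of_le
        (le_trans (Finset.card_filter_le _ _) (by simp)))
    have h3 : (S.card : ℝ) ^ b ≤ (T : ℝ) ^ b :=
      Real.rpow_le_rpow (Nat.cast_nonneg _) hcard hb.le
    calc M * ∑ k ∈ Finset.range S.card, ((k:ℝ) + 1) ^ (-a)
        ≤ M * ((1 / b) * (S.card : ℝ) ^ b) := by
          apply mul_le_mul_of_nonneg_left h2 hM
      _ ≤ M * (1 / b) * (T : ℝ) ^ b := by
          rw [mul_assoc]
          apply mul_le_mul_of_nonneg_left _ hM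
          exact mul_le_mul_of_nonneg_left h3 (by positivity)
  calc (∑ i : Fin K, ∑ t ∈ (Finset.range T).filter (fun t => I t = i), σ (n (I t) t))
      ≤ ∑ _i : Fin K, M * (1 / b) * (T : ℝ) ^ b := Finset.sum_le_sum fun i _ => hfiber i
    _ = K * (M * (1 / b) * (T : ℝ) ^ b) := by
        rw [Finset.sum_const, Finset.card_univ, Fintype.card_fin, nsmul_eq_mul]
    _ = M * K * ((2 + D) / (1 + D)) * (T : ℝ) ^ b := by
        rw [hb_def]
        rw [one_div_div]
        ring
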